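/- arXiv:1812.09700 — 2 statements merged into one kernel-verified Lean document; each statement's English description precedes it below -/
import Mathlib

section
/- Let u, v : ℝ × [0,T] → ℝ be bounded continuous functions with sup|u| ≤ N_b, sup|v| ≤ A_m, and let K ≥ 1 + α_b·β₂·(N_b + sup|v|)/N_b + α_m·β₂·(A_m + sup|u|)/N_b where β₂ bounds β_b. Suppose at a point (x₀,t₀) the function U = u·e^{−Kt} attains a negative minimum m < 0 over the region, with V = v·e^{−Kt} ≥ m everywhere. Then (−K − γ_b(x₀,t₀) − α_b·β_b(x₀,t₀)·v(x₀,t₀)/N_b)·m + α_b·β_b(x₀,t₀)·V(x₀,t₀) ≥ −m > 0. -/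
open Real

/-- Algebraic core of the contradiction at an interior negative minimum (Theorem 2.1). -/
theorem negative_minimum_inequality
    (Nb Am αb αm β₁ β₂ γ₁ γ₂ : ℝ)
    (hN : 0 < Nb) (hA : 0 < Am) (hαb : 0 < αb) (hαm : 0 < αm)
    (hβ₁ : 0 < β₁) (hγ₁ : 0 < γ₁)
    (βb γb : ℝ → ℝ → ℝ)
    (hβ : ∀ x t, β₁ ≤ βb x t ∧ βb x t ≤ β₂)
    (hγ : ∀ x t, γ₁ ≤ γb x t ∧ γb x t ≤ γ₂)
    (u v : ℝ → ℝ → ℝ) (T : ℝ)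
    (Mu Mv : ℝ) (hMu : ∀ x t, |u x t| ≤ Mu) (hMv : ∀ x t, |v x t| ≤ Mv)
    (hMuN : Mu ≤ Nb) (hMvA : Mv ≤ Am)
    (K : ℝ)
    (hK : K ≥ 1 + αb * β₂ * (Nb + Mv) / Nb + αm * β₂ * (Am + Mu) / Nb)
    (x₀ t₀ m : ℝ) (hm : m < 0)
    (hmin : u x₀ t₀ * Real.exp (-K * t₀) = m)
    (hV : ∀ x t, m ≤ v x t * Real.exp (-K * t)) :
    (-K - γb x₀ t₀ - αb * βb x₀ t₀ * v x₀ t₀ / Nb) * m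
      + αb * βb x₀ t₀ * (v x₀ t₀ * Real.exp (-K * t₀)) ≥ -m ∧ -m > 0 := by
  constructor
  · set β := βb x₀ t₀ with hβdef
    set γ := γb x₀ t₀ with hγdef
    obtain ⟨hb1, hb2⟩ := hβ x₀ t₀
    obtain ⟨hg1, hg2⟩ := hγ x₀ t₀
    have hβpos : 0 < β := lt_of_lt_of_le hβ₁ hb1
    have hγpos : 0 < γ := lt_of_lt_of_le hγ₁ hg1
    have hVm : m ≤ v x₀ t₀ * Real.exp (-K * t₀) := hV x₀ t₀
    have hv : |v x₀ t₀| ≤ Mv := hMv x₀ t₀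
    have hv1 : -Mv ≤ v x₀ t₀ := (abs_le.mp hv).1
    have hv2 : v x₀ t₀ ≤ Mv := (abs_le.mp hv).2
    have hMvnn : 0 ≤ Mv := le_trans (abs_nonneg _) hv
    have hMunn : 0 ≤ Mu := le_trans (abs_nonneg _) (hMu x₀ t₀)
    have hKN : Nb + αb * β₂ * (Nb + Mv) + αm * β₂ * (Am + Mu) ≤ K * Nb := by
      have h := mul_le_mul_of_nonneg_right hK (le_of_lt hN)
      calc Nb + αb * β₂ * (Nb + Mv) + αm * β₂ * (Am + Mu)
          = (1 + αb * β₂ * (Nb + Mv) / Nb + αm * β₂ * (Am + Mu) / Nb) * Nb := by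
            field_simp
        _ ≤ K * Nb := h
    -- key: β * (Nb - v) ≤ β₂ * (Nb + Mv)
    have hβ₂pos : 0 < β₂ := lt_of_lt_of_le hβpos hb2
    have hkey : β * (Nb - v x₀ t₀) ≤ β₂ * (Nb + Mv) := by
      rcases le_or_gt (Nb - v x₀ t₀) 0 with h | h
      · have : 0 ≤ β₂ * (Nb + Mv) := by positivity
        nlinarith
      · nlinarith
    have hmneg : 0 ≤ -m := by linarith
    have h1 : αb * (β * (Nb - v x₀ t₀)) * (-m) ≤ αb * (β₂ * (Nb + Mv)) * (-m) := by
      have := mul_le_mul_of_nonneg_right hkey hmneg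
      nlinarith [this]
    have h2 : (Nb + αb * β₂ * (Nb + Mv) + αm * β₂ * (Am + Mu)) * (-m) ≤ (K * Nb) * (-m) :=
      mul_le_mul_of_nonneg_right hKN hmneg
    have h3 : αb * β * Nb * m ≤ αb * β * Nb * (v x₀ t₀ * Real.exp (-K * t₀)) := by
      have : 0 ≤ αb * β * Nb := by positivity
      exact mul_le_mul_of_nonneg_left hVm this
    have h4 : 0 ≤ γ * Nb * (-m) := by positivity
    have h5 : 0 ≤ αm * β₂ * (Am + Mu) * (-m) := by
      have : 0 ≤ Am + Mu := by linarith
      positivity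
    rw [ge_iff_le, ← mul_le_mul_iff_right₀ hN]
    have hNne : (Nb:ℝ) ≠ 0 := ne_of_gt hN
    have heq : Nb * ((-K - γ - αb * β * v x₀ t₀ / Nb) * m
        + αb * βb x₀ t₀ * (v x₀ t₀ * Real.exp (-K * t₀)))
        = (-(K * Nb) - γ * Nb) * m - αb * β * v x₀ t₀ * m
          + αb * β * Nb * (v x₀ t₀ * Real.exp (-K * t₀)) := by
      field_simp
      ring
    linarith [heq, h1, h2, h3, h4, h5]
  · linarith
end

section
/- Let φ, ψ be continuous positive functions on [0,h₀) × [0,T] satisfying the periodic eigenvalue system φ_t − D1·φ_xx = α_b·β(x,t)·ψ − γ(x,t)·φ + λ₀·φ, ψ_t − D2·ψ_xx = α_m·β(x,t)·(A_m/N_b)·φ − d_m·ψ + λ₀·ψ with λ₀ < 0. For δ > 0, set I̲_b = δφ, I̲_m = δψ. If δ ≤ (−λ₀)·N_b / (max(α_b, α_m)·β_sup·max(sup ψ, sup φ)), then I̲_b and I̲_m satisfy the differential inequalities I̲_b,t − D1·I̲_b,xx ≤ −γ·I̲_b + α_b·β·((N_b − I̲_b)/N_b)·I̲_m and I̲_m,t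 − D2·I̲_m,xx ≤ −d_m·I̲_m + α_m·β·((A_m − I̲_m)/N_b)·I̲_b on (0,h₀) × [0,T]. -/
open Real Set

/-- A small multiple of the principal eigenfunction pair is a lower solution
    when lam0 < 0 (Theorem 5.6). -/
theorem small_eigenfunction_lower_solution
    (D1 D2 αb αm dm Nb Am h₀ T βsup lam0 : ℝ)
    (hD1 : 0 < D1) (hD2 : 0 < D2) (hαb : 0 < αb) (hαm : 0 < αm) (hdm : 0 < dm)
    (hN : 0 < Nb) (hA : 0 < Am) (hh₀ : 0 < h₀) (hT : 0 < T)
    (hβsup : 0 < βsup) (hlam : lam0 < 0)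
    (β γ : ℝ → ℝ → ℝ)
    (hβ : ∀ x t, 0 < β x t ∧ β x t ≤ βsup)
    (hγ : ∀ x t, 0 < γ x t)
    (φ ψ : ℝ → ℝ → ℝ)
    (hφc : ContinuousOn (fun p : ℝ × ℝ => φ p.1 p.2) (Ico 0 h₀ ×ˢ Icc 0 T))
    (hψc : ContinuousOn (fun p : ℝ × ℝ => ψ p.1 p.2) (Ico 0 h₀ ×ˢ Icc 0 T))
    (hφpos : ∀ x ∈ Ico 0 h₀, ∀ t ∈ Icc 0 T, 0 < φ x t)
    (hψpos : ∀ x ∈ Ico 0 h₀, ∀ t ∈ Icc 0 T, 0 < ψ x t)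
    -- the periodic eigenvalue system
    (heigφ : ∀ x ∈ Ioo 0 h₀, ∀ t ∈ Icc 0 T,
      deriv (fun s => φ x s) t - D1 * deriv (deriv (fun y => φ y t)) x
        = αb * β x t * ψ x t - γ x t * φ x t + lam0 * φ x t)
    (heigψ : ∀ x ∈ Ioo 0 h₀, ∀ t ∈ Icc 0 T,
      deriv (fun s => ψ x s) t - D2 * deriv (deriv (fun y => ψ y t)) x
        = αm * β x t * (Am / Nb) * φ x t - dm * ψ x t + lam0 * ψ x t)
    (supφ supψ : ℝ)
    (hsupφ : ∀ x ∈ Ico 0 h₀, ∀ t ∈ Icc 0 T, φ x t ≤ supφ)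
    (hsupψ : ∀ x ∈ Ico 0 h₀, ∀ t ∈ Icc 0 T, ψ x t ≤ supψ)
    (δ : ℝ) (hδ : 0 < δ)
    (hδsmall : δ ≤ (-lam0) * Nb / (max αb αm * βsup * max supψ supφ)) :
    ∀ x ∈ Ioo 0 h₀, ∀ t ∈ Icc 0 T,
      (deriv (fun s => δ * φ x s) t - D1 * deriv (deriv (fun y => δ * φ y t)) x
        ≤ -γ x t * (δ * φ x t) + αb * β x t * ((Nb - δ * φ x t) / Nb) * (δ * ψ x t)) ∧
      (deriv (fun s => δ * ψ x s) t - D2 * deriv (deriv (fun y => δ * ψ y t)) x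
        ≤ -dm * (δ * ψ x t) + αm * β x t * ((Am - δ * ψ x t) / Nb) * (δ * φ x t)) := by

  intro x hx t ht
  have hx' : x ∈ Ico 0 h₀ := ⟨le_of_lt hx.1, hx.2⟩
  have hφp := hφpos x hx' t ht
  have hψp := hψpos x hx' t ht
  obtain ⟨hβp, hβs⟩ := hβ x t
  have hγp := hγ x t
  set M := max αb αm with hMdef
  set S := max supψ supφ with hSdef
  have hM : 0 < M := lt_of_lt_of_le hαb (le_max_left _ _)
  have hS : 0 < S := lt_of_lt_of_le hψp ((hsupψ x hx' t ht).trans (le_max_left _ _))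
  have hden : 0 < M * βsup * S := by positivity
  have hkey : δ * (M * βsup * S) ≤ -lam0 * Nb := by
    have := (le_div_iff₀ hden).mp hδsmall
    linarith
  have hφS : φ x t ≤ S := (hsupφ x hx' t ht).trans (le_max_right _ _)
  have hψS : ψ x t ≤ S := (hsupψ x hx' t ht).trans (le_max_left _ _)
  have h1 : αb * β x t * δ * ψ x t ≤ -lam0 * Nb := by
    have hb : αb * β x t * δ * ψ x t ≤ M * βsup * δ * S := by
      gcongr <;> first | positivity | exact le_max_left _ _
    nlinarith
  have h2 : αm * β x t * δ * φ x t ≤ -lam0 * Nb := by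
    have hb : αm * β x t * δ * φ x t ≤ M * βsup * δ * S := by
      gcongr <;> first | positivity | exact le_max_right _ _
    nlinarith
  have e1 : deriv (fun s => δ * φ x s) t = δ * deriv (fun s => φ x s) t :=
    deriv_const_mul_field δ
  have e2 : deriv (deriv (fun y => δ * φ y t)) x
      = δ * deriv (deriv (fun y => φ y t)) x := by
    have h : (deriv (fun y => δ * φ y t)) = fun y => δ * deriv (fun z => φ z t) y := by
      funext y; exact deriv_const_mul_field δ
    rw [h]; exact deriv_const_mul_field δ
  have e3 : deriv (fun s => δ * ψ x s) t = δ * deriv (fun s => ψ x s) t :=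
    deriv_const_mul_field δ
  have e4 : deriv (deriv (fun y => δ * ψ y t)) x
      = δ * deriv (deriv (fun y => ψ y t)) x := by
    have h : (deriv (fun y => δ * ψ y t)) = fun y => δ * deriv (fun z => ψ z t) y := by
      funext y; exact deriv_const_mul_field δ
    rw [h]; exact deriv_const_mul_field δ
  have hE1 := heigφ x hx t ht
  have hE2 := heigψ x hx t ht
  constructor
  · rw [e1, e2]
    have hL : δ * deriv (fun s => φ x s) t - D1 * (δ * deriv (deriv (fun y => φ y t)) x)
        = δ * (αb * β x t * ψ x t - γ x t * φ x t + lam0 * φ x t) := by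
      rw [← hE1]; ring
    rw [hL]
    have hpos1 : 0 ≤ δ * φ x t * (-lam0 * Nb - αb * β x t * δ * ψ x t) / Nb := by
      apply div_nonneg _ hN.le
      apply mul_nonneg (by positivity)
      linarith
    have heq : -γ x t * (δ * φ x t) + αb * β x t * ((Nb - δ * φ x t) / Nb) * (δ * ψ x t)
        - δ * (αb * β x t * ψ x t - γ x t * φ x t + lam0 * φ x t)
        = δ * φ x t * (-lam0 * Nb - αb * β x t * δ * ψ x t) / Nb := by
      field_simp
      ring
    linarith
  · rw [e3, e4]
    have hL : δ * deriv (fun s => ψ x s) t - D2 * (δ * deriv (deriv (fun y => ψ y t)) x)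
        = δ * (αm * β x t * (Am / Nb) * φ x t - dm * ψ x t + lam0 * ψ x t) := by
      rw [← hE2]; ring
    rw [hL]
    have hpos2 : 0 ≤ δ * ψ x t * (-lam0 * Nb - αm * β x t * δ * φ x t) / Nb := by
      apply div_nonneg _ hN.le
      apply mul_nonneg (by positivity)
      linarith
    have heq : -dm * (δ * ψ x t) + αm * β x t * ((Am - δ * ψ x t) / Nb) * (δ * φ x t)
        - δ * (αm * β x t * (Am / Nb) * φ x t - dm * ψ x t + lam0 * ψ x t)
        = δ * ψ x t * (-lam0 * Nb - αm * β x t * δ * φ x t) / Nb := by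
      field_simp
      ring
    linarith
end
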